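/- arXiv:2011.14534 — 4 statements merged into one kernel-verified Lean document; each statement's English description precedes it below -/
import Mathlib

section
/- Let X be an n-dimensional Lévy process with characteristic exponent Ψ and let d = (d₁,…,dₙ) ∈ [0,∞)^n. Define the process Y(t) := (X₁(d₁t), …, Xₙ(dₙt)) for t ≥ 0. If Y has stationary and independent increments (equivalently, Y is a Lévy process, since Y(0)=0 a.s. and Y has a.s. càdlàg paths automatically), then: (1) the 2n-dimensional process Z(t) := (t·d, Y(t)) is a Lévy process; and (2) for every t ≥ 0, all θ₁, θ₂ ∈ ℝ^n, and every permutation σ of {1,…,n} with d_{σ(1)} ≤ … ≤ d_{σ(n)}, E[exp(i⟨θ₁, t·d⟩ + i⟨θ₂, Y(t)⟩)] = exp( t·( i⟨θ₁, d⟩ + (d ▸ Ψ)_σ(θ₂) ) ). (This expresses that for the deterministic subordinator T(t) = t·d, if X∘T is a Lévy process then (T, X∘T) is equal in law to the weak subordination (T, X⊙T).) -/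
/-!
Part (1) is inherited coordinatewise: `Y` starts at `0` and has càdlàg paths because `X` does,
and adjoining the deterministic drift `t • d` preserves independent and stationary increments.

For part (2), order the clocks as `0 ≤ d (σ 0) t ≤ … ≤ d (σ (n-1)) t`. Coordinate `σ m` of `Y t`
is that of `X` at the grid point `d (σ m) t`, i.e. of the sum of the first `m + 1` increments of
`X` along the grid, and summation by parts turns `⟨θ, Y t⟩` into `∑ₖ ⟨π_{σ(k),…} θ, k-th increment⟩`. These
increments are independent, with the laws of `X` at the grid spacings, so the characteristic
function factorises into `∏ₖ exp ((d (σ k) - d (σ (k-1))) t Ψ (π_{σ(k),…} θ))`, which is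
`exp (t (d ▸ Ψ)_σ θ)`.
-/

open MeasureTheory ProbabilityTheory Filter Set

noncomputable section

/-- The σ-algebra generated by a stochastic process. -/
def processSigma {Ω E : Type*} [MeasurableSpace E] (X : ℝ → Ω → E) : MeasurableSpace Ω :=
  ⨆ t : ℝ, MeasurableSpace.comap (X t) inferInstance

/-- A process has independent increments if for all `0 = t₀ ≤ t₁ ≤ … ≤ t_k` the
increments `X (t_j) - X (t_{j-1})` are jointly independent. -/
def HasIndepIncrements {Ω E : Type*} [MeasurableSpace Ω] [MeasurableSpace E] [Sub E]
    (P : Measure Ω) (X : ℝ → Ω → E) : Prop :=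
  ∀ (k : ℕ) (t : Fin (k + 1) → ℝ), t 0 = 0 → Monotone t →
    iIndepFun
      (fun i : Fin k => fun ω => X (t i.succ) ω - X (t i.castSucc) ω) P

/-- A process has stationary increments if `X (s+t) - X s` has the law of `X t`. -/
def HasStatIncrements {Ω E : Type*} [MeasurableSpace Ω] [MeasurableSpace E] [Sub E]
    (P : Measure Ω) (X : ℝ → Ω → E) : Prop :=
  ∀ s t : ℝ, 0 ≤ s → 0 ≤ t →
    P.map (fun ω => X (s + t) ω - X s ω) = P.map (X t)

/-- A path `f : ℝ → E` is càdlàg on `[0,∞)`: right-continuous at every `t ≥ 0` and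
with left limits at every `t > 0`. -/
def IsCadlagOn {E : Type*} [TopologicalSpace E] (f : ℝ → E) : Prop :=
  (∀ t : ℝ, 0 ≤ t → ContinuousWithinAt f (Set.Ici t) t) ∧
  (∀ t : ℝ, 0 < t → ∃ l, Tendsto f (nhdsWithin t (Set.Ico 0 t)) (nhds l))

/-- A Lévy process: measurable marginals, starts at `0` a.s., independent and stationary
increments, and a.s. càdlàg sample paths. -/
def IsLevyProcess {Ω E : Type*} [MeasurableSpace Ω] [MeasurableSpace E] [TopologicalSpace E]
    [AddGroup E] (P : Measure Ω) (X : ℝ → Ω → E) : Prop :=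
  (∀ t : ℝ, Measurable (X t)) ∧
  (∀ᵐ ω ∂P, X 0 ω = 0) ∧
  HasIndepIncrements P X ∧
  HasStatIncrements P X ∧
  (∀ᵐ ω ∂P, IsCadlagOn fun t => X t ω)

/-- `Ψ` is a characteristic exponent of the `ℝ^n`-valued process `X`:
`E[exp(i⟨θ, X t⟩)] = exp (t Ψ θ)` for `t ≥ 0`. -/
def IsCharExponent {Ω : Type*} [MeasurableSpace Ω] {n : ℕ} (P : Measure Ω)
    (X : ℝ → Ω → (Fin n → ℝ)) (Ψ : (Fin n → ℝ) → ℂ) : Prop :=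
  ∀ t : ℝ, 0 ≤ t → ∀ θ : Fin n → ℝ,
    ∫ ω, Complex.exp (Complex.I * ((∑ j, θ j * X t ω j : ℝ) : ℂ)) ∂P
      = Complex.exp ((t : ℂ) * Ψ θ)

/-- A subordinator: a Lévy process whose components are a.s. nonnegative and
nondecreasing in time. -/
def IsSubordinator {Ω : Type*} [MeasurableSpace Ω] {n : ℕ} (P : Measure Ω)
    (T : ℝ → Ω → (Fin n → ℝ)) : Prop :=
  IsLevyProcess P T ∧
  ∀ᵐ ω ∂P, ∀ j : Fin n, (∀ t : ℝ, 0 ≤ t → 0 ≤ T t ω j) ∧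
    (∀ s t : ℝ, 0 ≤ s → s ≤ t → T s ω j ≤ T t ω j)

/-- The ordered exponent `(s ▸ Ψ)_σ (θ) = ∑ₖ (s_{σ(k)} - s_{σ(k-1)}) Ψ (π_{{σ(k),…,σ(n)}} θ)`,
where `σ` enumerates the index set `ι` and `π_J` zeroes coordinates outside `J`. -/
def ordExp {ι : Type*} {N : ℕ} (σ : Fin N ≃ ι) (s : ι → ℝ)
    (Ψ : (ι → ℝ) → ℂ) (θ : ι → ℝ) : ℂ :=
  ∑ k : Fin N,
    (((s (σ k) : ℝ) : ℂ) -
        if hk : (k : ℕ) = 0 then 0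
        else ((s (σ ⟨(k : ℕ) - 1, by have := k.isLt; omega⟩) : ℝ) : ℂ)) *
      Ψ ({j : ι | ∃ m : Fin N, k ≤ m ∧ σ m = j}.indicator θ)

/-- The ordered exponent `(s ▸ Ψ)(θ)` computed with a canonical sorting permutation. -/
def ordExpSorted {n : ℕ} (s : Fin n → ℝ) (Ψ : (Fin n → ℝ) → ℂ) (θ : Fin n → ℝ) : ℂ :=
  ordExp (Tuple.sort s) s Ψ θ

namespace IsCadlagOn

variable {E F : Type*} [TopologicalSpace E] [TopologicalSpace F] {f : ℝ → E}

lemma comp_continuous {g : E → F} (hg : Continuous g) (hf : IsCadlagOn f) :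
    IsCadlagOn (g ∘ f) := by
  refine ⟨fun t ht => hg.continuousAt.comp_continuousWithinAt (hf.1 t ht), fun t ht => ?_⟩
  obtain ⟨l, hl⟩ := hf.2 t ht
  exact ⟨g l, (hg.tendsto l).comp hl⟩

lemma prodMk {g : ℝ → F} (hg : Continuous g) (hf : IsCadlagOn f) :
    IsCadlagOn fun t => (g t, f t) := by
  refine ⟨fun t ht => hg.continuousWithinAt.prodMk (hf.1 t ht), fun t ht => ?_⟩
  obtain ⟨l, hl⟩ := hf.2 t ht
  exact ⟨(g t, l), ((hg.tendsto t).mono_left nhdsWithin_le_nhds).prodMk_nhds hl⟩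

lemma pi {ι : Type*} {E : ι → Type*} [∀ i, TopologicalSpace (E i)] {f : ℝ → ∀ i, E i}
    (hf : ∀ i, IsCadlagOn fun t => f t i) : IsCadlagOn f := by
  refine ⟨fun t ht => continuousWithinAt_pi.mpr fun i => (hf i).1 t ht, fun t ht => ?_⟩
  choose l hl using fun i => (hf i).2 t ht
  exact ⟨l, tendsto_pi_nhds.mpr hl⟩

lemma comp_const_mul {c : ℝ} (hc : 0 ≤ c) (hf : IsCadlagOn f) : IsCadlagOn fun t => f (c * t) := by
  have hmul : Continuous fun t : ℝ => c * t := continuous_const_mul c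
  refine ⟨fun t ht => (hf.1 _ (mul_nonneg hc ht)).comp hmul.continuousWithinAt
    fun u hu => mul_le_mul_of_nonneg_left hu hc, fun t ht => ?_⟩
  rcases hc.eq_or_lt with rfl | hc
  · exact ⟨f 0, by simpa using tendsto_const_nhds⟩
  obtain ⟨l, hl⟩ := hf.2 _ (mul_pos hc ht)
  refine ⟨l, hl.comp (tendsto_nhdsWithin_iff.mpr
    ⟨(hmul.tendsto t).mono_left nhdsWithin_le_nhds, ?_⟩)⟩
  exact eventually_mem_nhdsWithin.mono fun u hu =>
    ⟨mul_nonneg hc.le hu.1, mul_lt_mul_of_pos_left hu.2 hc⟩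

end IsCadlagOn

section Increments

variable {Ω E F : Type*} [MeasurableSpace Ω] {P : Measure Ω} [MeasurableSpace E]
  [MeasurableSpace F] {Y : ℝ → Ω → E}

lemma HasIndepIncrements.prod_deterministic [Sub E] [Sub F] (hY : HasIndepIncrements P Y)
    (c : ℝ → F) : HasIndepIncrements P fun t ω => (c t, Y t ω) := fun k t h0 hmono =>
  (hY k t h0 hmono).comp (fun i y => (c (t i.succ) - c (t i.castSucc), y))
    fun _ => measurable_const.prodMk measurable_id

lemma HasStatIncrements.prod_smul [AddGroup E] [MeasurableSub₂ E] [AddCommGroup F] [Module ℝ F]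
    (hY : HasStatIncrements P Y) (hYmeas : ∀ t, Measurable (Y t)) (v : F) :
    HasStatIncrements P fun t ω => (t • v, Y t ω) := by
  intro s u hs hu
  have hpair : Measurable fun y : E => (u • v, y) := measurable_const.prodMk measurable_id
  have hincr : (fun ω => ((s + u) • v, Y (s + u) ω) - (s • v, Y s ω))
      = (fun y => (u • v, y)) ∘ fun ω => Y (s + u) ω - Y s ω := by
    ext ω <;> simp [add_smul]
  have hdiff : Measurable fun ω => Y (s + u) ω - Y s ω := (hYmeas _).sub (hYmeas _)
  rw [hincr, ← Measure.map_map hpair hdiff, hY s u hs hu,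
    Measure.map_map hpair (hYmeas u)]
  rfl

end Increments

section Levy

variable {Ω E F : Type*} [MeasurableSpace Ω] {P : Measure Ω} [MeasurableSpace E]
  [TopologicalSpace E] [AddGroup E]

lemma IsLevyProcess.prod_smul [MeasurableSub₂ E] [MeasurableSpace F] [TopologicalSpace F]
    [AddCommGroup F] [Module ℝ F] [ContinuousSMul ℝ F] {Y : ℝ → Ω → E}
    (hY : IsLevyProcess P Y) (v : F) : IsLevyProcess P fun t ω => (t • v, Y t ω) := by
  obtain ⟨hmeas, hzero, hind, hstat, hcadlag⟩ := hY
  refine ⟨fun t => measurable_const.prodMk (hmeas t), ?_, hind.prod_deterministic _,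
    hstat.prod_smul hmeas v, ?_⟩
  · filter_upwards [hzero] with ω hω
    simp [hω]
  · filter_upwards [hcadlag] with ω hω
    exact hω.prodMk (continuous_id.smul continuous_const)

lemma IsLevyProcess.of_coord_timeChange {ι : Type*} {X Y : ℝ → Ω → (ι → E)} {d : ι → ℝ}
    (hX : IsLevyProcess P X) (hd : ∀ j, 0 ≤ d j) (hY : ∀ t ω j, Y t ω j = X (d j * t) ω j)
    (hYind : HasIndepIncrements P Y) (hYstat : HasStatIncrements P Y) :
    IsLevyProcess P Y := by
  obtain ⟨hmeas, hzero, -, -, hcadlag⟩ := hX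
  obtain rfl : Y = fun t ω j => X (d j * t) ω j := funext₃ hY
  refine ⟨fun t => measurable_pi_lambda _ fun j => ?_, ?_, hYind, hYstat, ?_⟩
  · exact (measurable_pi_apply j).comp (hmeas _)
  · filter_upwards [hzero] with ω hω
    funext j
    simp [hω]
  · filter_upwards [hcadlag] with ω hω
    exact IsCadlagOn.pi fun j => (hω.comp_continuous (continuous_apply j)).comp_const_mul (hd j)

end Levy

section OrderedExponent

variable {ι : Type*} {N : ℕ} (σ : Fin N ≃ ι)

def ordGrid (s : ι → ℝ) : Fin (N + 1) → ℝ := Fin.cons 0 (s ∘ σ)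

def tailProj (θ : ι → ℝ) (k : Fin N) : ι → ℝ :=
  {j : ι | ∃ m : Fin N, k ≤ m ∧ σ m = j}.indicator θ

variable {σ}

@[simp] lemma ordGrid_zero (s : ι → ℝ) : ordGrid σ s 0 = 0 := rfl

@[simp] lemma ordGrid_succ (s : ι → ℝ) (k : Fin N) : ordGrid σ s k.succ = s (σ k) := rfl

lemma ordGrid_castSucc (s : ι → ℝ) (k : Fin N) :
    ordGrid σ s k.castSucc =
      if hk : (k : ℕ) = 0 then 0 else s (σ ⟨(k : ℕ) - 1, by have := k.isLt; omega⟩) := by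
  obtain ⟨_ | k, hk⟩ := k
  · rfl
  · exact ordGrid_succ s ⟨k, by omega⟩

lemma monotone_ordGrid {s : ι → ℝ} (hs : ∀ j, 0 ≤ s j) (hσ : Monotone (s ∘ σ)) :
    Monotone (ordGrid σ s) := by
  cases N with
  | zero => exact Fin.monotone_iff_le_succ.mpr fun i => i.elim0
  | succ N => exact hσ.vecCons (hs _)

lemma tailProj_apply (θ : ι → ℝ) (k m : Fin N) :
    tailProj σ θ k (σ m) = if k ≤ m then θ (σ m) else 0 := by
  split_ifs with h
  · exact Set.indicator_of_mem (s := {j | ∃ m', k ≤ m' ∧ σ m' = j}) ⟨m, h, rfl⟩ θ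
  · refine Set.indicator_of_notMem ?_ θ
    rintro ⟨m', hm', hσm'⟩
    exact h (σ.injective hσm' ▸ hm')

lemma ordExp_eq_sum (s : ι → ℝ) (Ψ : (ι → ℝ) → ℂ) (θ : ι → ℝ) :
    ordExp σ s Ψ θ =
      ∑ k, ((ordGrid σ s k.succ - ordGrid σ s k.castSucc : ℝ) : ℂ) * Ψ (tailProj σ θ k) := by
  refine Finset.sum_congr rfl fun k _ => ?_
  rw [ordGrid_succ, ordGrid_castSucc]
  split_ifs <;> simp [tailProj]

lemma sum_tailProj_mul_sub [Fintype ι] (θ : ι → ℝ) (f : Fin (N + 1) → ι → ℝ) :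
    ∑ k, ∑ j, tailProj σ θ k j * (f k.succ j - f k.castSucc j)
      = ∑ m, θ (σ m) * (f m.succ (σ m) - f 0 (σ m)) := by
  calc ∑ k, ∑ j, tailProj σ θ k j * (f k.succ j - f k.castSucc j)
      = ∑ k, ∑ m, if k ≤ m then θ (σ m) * (f k.succ (σ m) - f k.castSucc (σ m)) else 0 := by
        refine Finset.sum_congr rfl fun k _ => ?_
        rw [← σ.sum_comp]
        refine Finset.sum_congr rfl fun m _ => ?_
        rw [tailProj_apply]
        split_ifs <;> simp
    _ = ∑ m, ∑ k ∈ Finset.Iic m, θ (σ m) * (f k.succ (σ m) - f k.castSucc (σ m)) := by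
        rw [Finset.sum_comm]
        refine Finset.sum_congr rfl fun m _ => ?_
        rw [← Finset.sum_filter]
        congr 1
        ext k
        simp
    _ = _ := by
        refine Finset.sum_congr rfl fun m _ => ?_
        rw [← Finset.mul_sum, Fin.sum_Iic_sub m fun i => f i (σ m)]

end OrderedExponent

section CharExponent

variable {Ω : Type*} [MeasurableSpace Ω] {P : Measure Ω} {n : ℕ} {X : ℝ → Ω → (Fin n → ℝ)}
  {Ψ : (Fin n → ℝ) → ℂ}

lemma IsCharExponent.integral_exp_increment (hΨ : IsCharExponent P X Ψ)
    (hmeas : ∀ t, Measurable (X t)) (hstat : HasStatIncrements P X) {s u : ℝ} (hs : 0 ≤ s)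
    (hsu : s ≤ u) (θ : Fin n → ℝ) :
    ∫ ω, Complex.exp (Complex.I * ((∑ j, θ j * (X u ω j - X s ω j) : ℝ) : ℂ)) ∂P
      = Complex.exp (((u - s : ℝ) : ℂ) * Ψ θ) := by
  set g : (Fin n → ℝ) → ℂ := fun x => Complex.exp (Complex.I * ((∑ j, θ j * x j : ℝ) : ℂ))
  have hg : Measurable g := by fun_prop
  have hlaw : P.map (fun ω => X u ω - X s ω) = P.map (X (u - s)) := by
    simpa using hstat s (u - s) hs (sub_nonneg.mpr hsu)
  calc ∫ ω, g (X u ω - X s ω) ∂P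
      = ∫ x, g x ∂(P.map fun ω => X u ω - X s ω) :=
        (integral_map ((hmeas u).sub (hmeas s)).aemeasurable hg.aestronglyMeasurable).symm
    _ = ∫ ω, g (X (u - s) ω) ∂P := by
        rw [hlaw, integral_map (hmeas _).aemeasurable hg.aestronglyMeasurable]
    _ = _ := hΨ _ (sub_nonneg.mpr hsu) θ

lemma IsCharExponent.integral_exp_sum_increments (hΨ : IsCharExponent P X Ψ)
    (hmeas : ∀ t, Measurable (X t)) (hind : HasIndepIncrements P X)
    (hstat : HasStatIncrements P X) {N : ℕ} {s : Fin (N + 1) → ℝ} (hs0 : s 0 = 0)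
    (hs : Monotone s) (Θ : Fin N → Fin n → ℝ) :
    ∫ ω, Complex.exp (Complex.I *
        ((∑ k, ∑ j, Θ k j * (X (s k.succ) ω j - X (s k.castSucc) ω j) : ℝ) : ℂ)) ∂P
      = Complex.exp (∑ k, ((s k.succ - s k.castSucc : ℝ) : ℂ) * Ψ (Θ k)) := by
  set g : Fin N → (Fin n → ℝ) → ℂ :=
    fun k x => Complex.exp (Complex.I * ((∑ j, Θ k j * x j : ℝ) : ℂ))
  have hg : ∀ k, Measurable (g k) := fun k => by fun_prop
  have hs_nonneg : ∀ i, 0 ≤ s i := fun i => hs0 ▸ hs (Fin.zero_le i)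
  rw [Complex.exp_sum]
  calc _ = ∫ ω, ∏ k, g k (X (s k.succ) ω - X (s k.castSucc) ω) ∂P := by
        congr with ω
        simp only [g, Pi.sub_apply, Complex.ofReal_sum, Finset.mul_sum, Complex.exp_sum]
    _ = ∏ k, ∫ ω, g k (X (s k.succ) ω - X (s k.castSucc) ω) ∂P :=
        (hind N s hs0 hs).integral_fun_prod_comp
          (fun k => ((hmeas _).sub (hmeas _)).aemeasurable) fun k => (hg k).aestronglyMeasurable
    _ = _ := Finset.prod_congr rfl fun k _ =>
        hΨ.integral_exp_increment hmeas hstat (hs_nonneg _) (hs (Fin.castSucc_le_succ k)) _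

end CharExponent

lemma IsLevyProcess.integral_exp_coord_timeChange {Ω : Type*} [MeasurableSpace Ω]
    {P : Measure Ω} {n N : ℕ} {X Y : ℝ → Ω → (Fin n → ℝ)} {Ψ : (Fin n → ℝ) → ℂ}
    (hX : IsLevyProcess P X) (hΨ : IsCharExponent P X Ψ) {d : Fin n → ℝ} (hd : ∀ j, 0 ≤ d j)
    (hY : ∀ t ω j, Y t ω j = X (d j * t) ω j) {σ : Fin N ≃ Fin n} (hσ : Monotone (d ∘ σ))
    {t : ℝ} (ht : 0 ≤ t) (θ : Fin n → ℝ) :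
    ∫ ω, Complex.exp (Complex.I * ((∑ j, θ j * Y t ω j : ℝ) : ℂ)) ∂P
      = Complex.exp ((t : ℂ) * ordExp σ d Ψ θ) := by
  obtain ⟨hmeas, hzero, hind, hstat, -⟩ := hX
  set s : Fin (N + 1) → ℝ := fun i => ordGrid σ d i * t
  have hs : Monotone s := (monotone_ordGrid hd hσ).mul_const ht
  have hsum : ∀ᵐ ω ∂P, ∑ j, θ j * Y t ω j
      = ∑ k, ∑ j, tailProj σ θ k j * (X (s k.succ) ω j - X (s k.castSucc) ω j) := by
    filter_upwards [hzero] with ω hω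
    rw [sum_tailProj_mul_sub θ fun i => X (s i) ω, ← σ.sum_comp]
    simp [s, hY, hω]
  rw [integral_congr_ae (hsum.mono fun ω h => by rw [h]),
    hΨ.integral_exp_sum_increments hmeas hind hstat (by simp [s]) hs, ordExp_eq_sum,
    Finset.mul_sum]
  congr 1
  refine Finset.sum_congr rfl fun k _ => ?_
  simp only [s]
  push_cast
  ring

theorem strong_eq_weak_deterministic_subordinator_general {Ω : Type*} [MeasurableSpace Ω]
    (P : Measure Ω) {n : ℕ}
    (X : ℝ → Ω → (Fin n → ℝ)) (Ψ : (Fin n → ℝ) → ℂ)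
    (hX : IsLevyProcess P X) (hΨ : IsCharExponent P X Ψ)
    (d : Fin n → ℝ) (hd : ∀ j, 0 ≤ d j)
    (Y : ℝ → Ω → (Fin n → ℝ)) (hY : ∀ t ω j, Y t ω j = X (d j * t) ω j)
    (hYstat : HasStatIncrements P Y) (hYind : HasIndepIncrements P Y) :
    IsLevyProcess P
      (fun t ω => (((fun j => t * d j), Y t ω) : (Fin n → ℝ) × (Fin n → ℝ))) ∧
    (∀ t : ℝ, 0 ≤ t → ∀ θ₁ θ₂ : Fin n → ℝ, ∀ σ : Equiv.Perm (Fin n),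
      Monotone (fun k => d (σ k)) →
      ∫ ω, Complex.exp (Complex.I * ((∑ j, θ₁ j * (t * d j) : ℝ) : ℂ)
            + Complex.I * ((∑ j, θ₂ j * Y t ω j : ℝ) : ℂ)) ∂P
        = Complex.exp ((t : ℂ) *
            (Complex.I * ((∑ j, θ₁ j * d j : ℝ) : ℂ) + ordExp σ d Ψ θ₂))) := by
  refine ⟨(hX.of_coord_timeChange hd hY hYind hYstat).prod_smul d, ?_⟩
  intro t ht θ₁ θ₂ σ hσ
  have hdrift : ∑ j, θ₁ j * (t * d j) = t * ∑ j, θ₁ j * d j := by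
    rw [Finset.mul_sum]
    exact Finset.sum_congr rfl fun j _ => by ring
  simp only [Complex.exp_add, integral_const_mul,
    hX.integral_exp_coord_timeChange hΨ hd hY hσ ht, hdrift, mul_add]
  push_cast
  ring_nf

/-- for a Lévy process `X` with characteristic exponent `Ψ` and a deterministic
subordinator `T(t) = t·d`, if `Y(t) = (X₁(d₁t),…,Xₙ(dₙt))` has stationary and independent
increments, then `Z(t) = (t·d, Y(t))` is a Lévy process and has the characteristic function of
the weak subordination `(T, X⊙T)`. -/
theorem strong_eq_weak_deterministic_subordinator {Ω : Type*} [MeasurableSpace Ω]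
    (P : Measure Ω) [IsProbabilityMeasure P] {n : ℕ}
    (X : ℝ → Ω → (Fin n → ℝ)) (Ψ : (Fin n → ℝ) → ℂ)
    (hX : IsLevyProcess P X) (hΨ : IsCharExponent P X Ψ)
    (d : Fin n → ℝ) (hd : ∀ j, 0 ≤ d j)
    (Y : ℝ → Ω → (Fin n → ℝ)) (hY : ∀ t ω j, Y t ω j = X (d j * t) ω j)
    (hYstat : HasStatIncrements P Y) (hYind : HasIndepIncrements P Y) :
    IsLevyProcess P
      (fun t ω => (((fun j => t * d j), Y t ω) : (Fin n → ℝ) × (Fin n → ℝ))) ∧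
    (∀ t : ℝ, 0 ≤ t → ∀ θ₁ θ₂ : Fin n → ℝ, ∀ σ : Equiv.Perm (Fin n),
      Monotone (fun k => d (σ k)) →
      ∫ ω, Complex.exp (Complex.I * ((∑ j, θ₁ j * (t * d j) : ℝ) : ℂ)
            + Complex.I * ((∑ j, θ₂ j * Y t ω j : ℝ) : ℂ)) ∂P
        = Complex.exp ((t : ℂ) *
            (Complex.I * ((∑ j, θ₁ j * d j : ℝ) : ℂ) + ordExp σ d Ψ θ₂))) :=
  strong_eq_weak_deterministic_subordinator_general P X Ψ hX hΨ d hd Y hY hYstat hYind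

end
end

section
/- Let X be an n-dimensional Lévy process with characteristic exponent Ψ and let T be an n-dimensional subordinator independent of X. Define the strong subordination (X∘T)(t) := (X₁(T₁(t)), …, Xₙ(Tₙ(t))). Then for every t ≥ 0 and all θ₁, θ₂ ∈ ℝ^n, E[ exp( i⟨θ₁, T(t)⟩ + i⟨θ₂, (X∘T)(t)⟩ ) ] = E[ exp( i⟨θ₁, T(t)⟩ + (T(t) ▸ Ψ)(θ₂) ) ], where for each ω the quantity (T(t)(ω) ▸ Ψ)(θ₂) := (T(t)(ω) ▸ Ψ)_σ(θ₂) is computed with any permutation σ of {1,…,n} sorting the components of T(t)(ω) (the value does not depend on the choice of σ, and the integrand on the right-hand side is bounded in modulus by 1 since Re Ψ ≤ 0). -/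
open MeasureTheory ProbabilityTheory Filter Set

noncomputable section

/-!
For deterministic times `s ≥ 0` sorted by `σ`, the sum `∑ⱼ θⱼ Xⱼ(sⱼ)` telescopes into
`∑ₖ ⟨π_{σ(k),…,σ(n)} θ, X(s_{σ(k)}) - X(s_{σ(k-1)})⟩`, a sum of functions of independent
increments; stationarity turns the `k`-th factor of its characteristic function into
`exp ((s_{σ(k)} - s_{σ(k-1)}) Ψ(π θ))`, which gives `exp ((s ▸ Ψ)_σ θ)`.

For a random time that is independent of `X` and takes countably many values, one conditions on
each value. A general `T(t)` is approximated from above by its dyadic roundings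
`⌈2ᵐ T(t)⌉ / 2ᵐ`, which are sorted by the same permutation as `T(t)`. Right-continuity of the
paths of `X` and dominated convergence pass to the limit on the left-hand side, continuity of
`s ↦ (s ▸ Ψ)_σ θ` on the right-hand side.
-/

open Topology

def charExp {ι : Type*} [Fintype ι] (θ x : ι → ℝ) : ℂ :=
  Complex.exp (Complex.I * ((∑ j, θ j * x j : ℝ) : ℂ))

section CharExp

variable {ι : Type*} [Fintype ι]

lemma norm_charExp (θ x : ι → ℝ) : ‖charExp θ x‖ = 1 := by
  rw [charExp, mul_comm, Complex.norm_exp_ofReal_mul_I]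

lemma continuous_charExp (θ : ι → ℝ) : Continuous (charExp θ) := by
  unfold charExp; fun_prop

end CharExp

section ProcessSigma

variable {Ω E : Type*} [MeasurableSpace E]

lemma measurable_processSigma (X : ℝ → Ω → E) (t : ℝ) : Measurable[processSigma X] (X t) :=
  Measurable.of_comap_le (le_iSup (fun u => MeasurableSpace.comap (X u) inferInstance) t)

lemma measurable_eval_diag {mΩ : MeasurableSpace Ω} {ι : Type*} {X : ℝ → Ω → ι → ℝ}
    (hX : ∀ t, Measurable (X t)) (s : ι → ℝ) : Measurable fun ω j => X (s j) ω j :=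
  measurable_pi_lambda _ fun j => (measurable_pi_apply j).comp (hX (s j))

lemma processSigma_le [mΩ : MeasurableSpace Ω] {X : ℝ → Ω → E} (hX : ∀ t, Measurable (X t)) :
    processSigma X ≤ mΩ :=
  iSup_le fun t => (hX t).comap_le

end ProcessSigma

section OrdExp

variable {ι : Type*} {N : ℕ}

def sortedTimeGrid (σ : Fin N ≃ ι) (s : ι → ℝ) : Fin (N + 1) → ℝ :=
  Fin.cons 0 (s ∘ σ)

lemma monotone_sortedTimeGrid {σ : Fin N ≃ ι} {s : ι → ℝ} (hs : 0 ≤ s)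
    (hσ : Monotone (s ∘ σ)) : Monotone (sortedTimeGrid σ s) := by
  intro i j hij
  cases i using Fin.cases with
  | zero => cases j using Fin.cases with
    | zero => exact le_rfl
    | succ j => simpa [sortedTimeGrid] using hs (σ j)
  | succ i => cases j using Fin.cases with
    | zero => exact absurd hij (by simp)
    | succ j => simpa [sortedTimeGrid] using hσ (Fin.succ_le_succ_iff.1 hij)

lemma ordExp_eq_sum_sortedTimeGrid (σ : Fin N ≃ ι) (s : ι → ℝ) (Ψ : (ι → ℝ) → ℂ)
    (θ : ι → ℝ) :
    ordExp σ s Ψ θ = ∑ k, ((sortedTimeGrid σ s k.succ - sortedTimeGrid σ s k.castSucc : ℝ) : ℂ) *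
      Ψ ({j | k ≤ σ.symm j}.indicator θ) := by
  refine Finset.sum_congr rfl fun k _ => ?_
  have hset : {j | ∃ m, k ≤ m ∧ σ m = j} = {j | k ≤ σ.symm j} := by
    ext j
    exact ⟨fun ⟨m, hm, hmj⟩ => by simpa [← hmj] using hm,
      fun h => ⟨σ.symm j, h, σ.apply_symm_apply j⟩⟩
  rw [hset, sortedTimeGrid, Fin.cons_succ]
  congr 2
  rcases k with ⟨_ | i, hi⟩
  · simp
  · have : (⟨i + 1, hi⟩ : Fin N).castSucc = (⟨i, by omega⟩ : Fin N).succ := rfl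
    rw [this, Fin.cons_succ]
    simp

lemma continuous_ordExp (σ : Fin N ≃ ι) (Ψ : (ι → ℝ) → ℂ) (θ : ι → ℝ) :
    Continuous fun s => ordExp σ s Ψ θ := by
  refine continuous_finsetSum _ fun k _ => ?_
  split_ifs <;> fun_prop

variable [Fintype ι]

lemma sum_mul_eq_sum_sum_increments (σ : Fin N ≃ ι) (s θ : ι → ℝ) (x : ℝ → ι → ℝ)
    (hx : x 0 = 0) :
    ∑ j, θ j * x (s j) j = ∑ k, ∑ j, {j | k ≤ σ.symm j}.indicator θ j *
      (x (sortedTimeGrid σ s k.succ) j - x (sortedTimeGrid σ s k.castSucc) j) := by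
  rw [Finset.sum_comm]
  refine Finset.sum_congr rfl fun j _ => ?_
  simp only [Set.indicator_apply, Set.mem_ofPred_eq, ite_mul, zero_mul]
  rw [← Finset.sum_filter, ← Finset.mul_sum]
  have hIic : Finset.univ.filter (fun k => k ≤ σ.symm j) = Finset.Iic (σ.symm j) := by
    ext k; simp
  rw [hIic, Fin.sum_Iic_sub (σ.symm j) (fun i => x (sortedTimeGrid σ s i) j)]
  simp [sortedTimeGrid, hx]

end OrdExp

section Levy

variable {Ω : Type*} [MeasurableSpace Ω] {P : Measure Ω} {n : ℕ}
  {X : ℝ → Ω → (Fin n → ℝ)} {Ψ : (Fin n → ℝ) → ℂ}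

lemma IsCharExponent.integral_charExp_sub (hΨ : IsCharExponent P X Ψ)
    (hXm : ∀ t, Measurable (X t)) (hstat : HasStatIncrements P X) {a b : ℝ} (ha : 0 ≤ a)
    (hab : a ≤ b) (θ : Fin n → ℝ) :
    ∫ ω, charExp θ (X b ω - X a ω) ∂P = Complex.exp (((b - a : ℝ) : ℂ) * Ψ θ) := by
  have hlaw := hstat a (b - a) ha (sub_nonneg.2 hab)
  rw [add_sub_cancel] at hlaw
  have hφ := (continuous_charExp θ).aestronglyMeasurable (μ := P.map (X (b - a)))
  rw [← integral_map (φ := fun ω => X b ω - X a ω) ((hXm b).sub (hXm a)).aemeasurable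
    (hlaw ▸ hφ), hlaw, integral_map (hXm _).aemeasurable hφ]
  exact hΨ _ (sub_nonneg.2 hab) θ

theorem IsLevyProcess.integral_charExp_eq_exp_ordExp (hX : IsLevyProcess P X)
    (hΨ : IsCharExponent P X Ψ) (σ : Equiv.Perm (Fin n)) {s : Fin n → ℝ} (hs : 0 ≤ s)
    (hσ : Monotone (s ∘ σ)) (θ : Fin n → ℝ) :
    ∫ ω, charExp θ (fun j => X (s j) ω j) ∂P = Complex.exp (ordExp σ s Ψ θ) := by
  obtain ⟨hXm, hX0, hXind, hXstat, -⟩ := hX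
  set τ := sortedTimeGrid σ s
  have hτ : Monotone τ := monotone_sortedTimeGrid hs hσ
  set c : Fin n → Fin n → ℝ := fun k => {j | k ≤ σ.symm j}.indicator θ
  have hprod : ∀ᵐ ω ∂P, charExp θ (fun j => X (s j) ω j)
      = ∏ k, charExp (c k) (X (τ k.succ) ω - X (τ k.castSucc) ω) := by
    filter_upwards [hX0] with ω hω
    simp only [charExp, ← Complex.exp_sum, ← Finset.mul_sum, ← Complex.ofReal_sum, Pi.sub_apply]
    rw [sum_mul_eq_sum_sum_increments σ s θ (fun u => X u ω) hω]
  rw [integral_congr_ae hprod, (hXind n τ rfl hτ).integral_fun_prod_comp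
    (fun k => ((hXm _).sub (hXm _)).aemeasurable)
    (fun k => (continuous_charExp (c k)).aestronglyMeasurable)]
  have hτ0 : ∀ k, 0 ≤ τ k := fun k => hτ (Fin.zero_le k)
  simp_rw [hΨ.integral_charExp_sub hXm hXstat (hτ0 _) (hτ (Fin.castSucc_le_succ _))]
  rw [← Complex.exp_sum, ordExp_eq_sum_sortedTimeGrid]

end Levy

section CountableIndex

variable {Ω ι : Type*} [Countable ι] [MeasurableSpace ι] [MeasurableSingletonClass ι]

lemma measurable_apply_of_countable {mΩ : MeasurableSpace Ω} {β : Type*} [MeasurableSpace β]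
    {G : ι → Ω → β} (hG : ∀ z, Measurable (G z)) {d : Ω → ι} (hd : Measurable d) :
    Measurable fun ω => G (d ω) ω :=
  (measurable_from_prod_countable_left (f := fun p : Ω × ι => G p.2 p.1) hG).comp
    (measurable_id.prodMk hd)

theorem integral_mul_apply_eq_of_indep {𝕜 : Type*} [RCLike 𝕜] {m₁ m₂ mΩ : MeasurableSpace Ω}
    {P : Measure Ω} [IsProbabilityMeasure P] (hm₁ : m₁ ≤ mΩ) (hm₂ : m₂ ≤ mΩ)
    (hind : Indep m₁ m₂ P) {d : Ω → ι} (hd : Measurable[m₁] d) {F : Ω → 𝕜}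
    (hF : Measurable[m₁] F) {C : ℝ} (hFC : ∀ ω, ‖F ω‖ ≤ C) {G : ι → Ω → 𝕜}
    (hG : ∀ z, Measurable[m₂] (G z)) {D : ℝ} (hGD : ∀ z ω, ‖G z ω‖ ≤ D) :
    ∫ ω, F ω * G (d ω) ω ∂P = ∫ ω, F ω * ∫ ω', G (d ω) ω' ∂P ∂P := by
  have hdm : Measurable d := hd.mono hm₁ le_rfl
  have hFm : Measurable F := hF.mono hm₁ le_rfl
  have hGm : ∀ z, Measurable (G z) := fun z => (hG z).mono hm₂ le_rfl
  have hfiber : ∀ z, MeasurableSet (d ⁻¹' {z}) := fun z => hdm (measurableSet_singleton z)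
  have hdisj : Pairwise (Function.onFun Disjoint fun z => d ⁻¹' {z}) :=
    fun z z' h => Set.disjoint_left.2 fun ω hz hz' => h (hz.symm.trans hz')
  have hcover : ⋃ z, d ⁻¹' {z} = univ := by ext ω; simp
  have hsum {f : Ω → 𝕜} (hf : Integrable f P) :
      HasSum (fun z => ∫ ω in d ⁻¹' {z}, f ω ∂P) (∫ ω, f ω ∂P) := by
    simpa [hcover] using hasSum_integral_iUnion hfiber hdisj hf.integrableOn
  have hfib : ∀ z, ∫ ω in d ⁻¹' {z}, F ω * G (d ω) ω ∂P
      = ∫ ω in d ⁻¹' {z}, F ω * ∫ ω', G (d ω) ω' ∂P ∂P := by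
    intro z
    have hFz : Measurable[m₁] ((d ⁻¹' {z}).indicator F) :=
      hF.indicator (hd (measurableSet_singleton z))
    have hindep : IndepFun ((d ⁻¹' {z}).indicator F) (G z) P :=
      (IndepFun_iff_Indep _ _ _).2 (indep_of_indep_of_le_right
        (indep_of_indep_of_le_left hind hFz.comap_le) (hG z).comap_le)
    calc ∫ ω in d ⁻¹' {z}, F ω * G (d ω) ω ∂P
        = ∫ ω, (d ⁻¹' {z}).indicator F ω * G z ω ∂P := by
          rw [← integral_indicator (hfiber z)]
          refine integral_congr_ae (ae_of_all _ fun ω => ?_)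
          by_cases hω : ω ∈ d ⁻¹' {z} <;> simp_all
      _ = (∫ ω, (d ⁻¹' {z}).indicator F ω ∂P) * ∫ ω, G z ω ∂P :=
          hindep.integral_fun_mul_eq_mul_integral
            (hFz.mono hm₁ le_rfl).aestronglyMeasurable (hGm z).aestronglyMeasurable
      _ = ∫ ω in d ⁻¹' {z}, F ω * ∫ ω', G (d ω) ω' ∂P ∂P := by
          rw [← integral_mul_const, ← integral_indicator (hfiber z)]
          refine integral_congr_ae (ae_of_all _ fun ω => ?_)
          by_cases hω : ω ∈ d ⁻¹' {z} <;> simp_all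
  have hbound {g : Ω → 𝕜} (hg : Measurable g) (hgD : ∀ ω, ‖g ω‖ ≤ D) :
      Integrable (fun ω => F ω * g ω) P :=
    Integrable.of_bound (hFm.mul hg).aestronglyMeasurable (C * D) (ae_of_all _ fun ω => by
      rw [norm_mul]
      exact mul_le_mul (hFC ω) (hgD ω) (norm_nonneg _) ((norm_nonneg _).trans (hFC ω)))
  have hint₁ := hbound (measurable_apply_of_countable hGm hdm) fun ω => hGD _ ω
  have hint₂ := hbound (g := fun ω => ∫ ω', G (d ω) ω' ∂P)
    ((measurable_of_countable fun z => ∫ ω', G z ω' ∂P).comp hdm) fun ω => by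
    simpa using norm_integral_le_of_norm_le_const (μ := P) (ae_of_all _ (hGD (d ω)))
  exact (hsum hint₁).unique (by simpa only [hfib] using hsum hint₂)

end CountableIndex

section Dyadic

def dyadicIndex (m : ℕ) (x : ℝ) : ℤ := ⌈(2 : ℝ) ^ m * x⌉

def dyadicCeil (m : ℕ) (x : ℝ) : ℝ := dyadicIndex m x / 2 ^ m

@[fun_prop]
lemma measurable_dyadicIndex (m : ℕ) : Measurable (dyadicIndex m) :=
  Int.measurable_ceil.comp (measurable_const.mul measurable_id)

lemma le_dyadicCeil (m : ℕ) (x : ℝ) : x ≤ dyadicCeil m x := by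
  rw [dyadicCeil, le_div_iff₀ (by positivity), mul_comm]
  exact Int.le_ceil _

lemma dyadicCeil_le (m : ℕ) (x : ℝ) : dyadicCeil m x ≤ x + (2 ^ m)⁻¹ := by
  rw [dyadicCeil, div_le_iff₀ (by positivity), add_mul, inv_mul_cancel₀ (by positivity),
    mul_comm]
  exact (Int.ceil_lt_add_one _).le

lemma monotone_dyadicCeil (m : ℕ) : Monotone (dyadicCeil m) := fun x y h => by
  unfold dyadicCeil dyadicIndex
  gcongr

lemma tendsto_dyadicCeil (x : ℝ) : Tendsto (fun m => dyadicCeil m x) atTop (𝓝[≥] x) := by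
  refine tendsto_nhdsWithin_iff.2 ⟨?_, Eventually.of_forall fun m => le_dyadicCeil m x⟩
  have h : Tendsto (fun m : ℕ => ((2 : ℝ) ^ m)⁻¹) atTop (𝓝 0) :=
    tendsto_inv_atTop_zero.comp (tendsto_pow_atTop_atTop_of_one_lt one_lt_two)
  exact tendsto_of_tendsto_of_tendsto_of_le_of_le tendsto_const_nhds
    (by simpa using h.const_add x) (le_dyadicCeil · x) (dyadicCeil_le · x)

lemma measurable_comp_dyadicCeil {Ω ι β : Type*} [MeasurableSpace Ω] [Finite ι]
    [MeasurableSpace β] {H : (ι → ℝ) → Ω → β} (hH : ∀ s, Measurable (H s)) {τ : Ω → ι → ℝ}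
    (hτ : Measurable τ) (m : ℕ) : Measurable fun ω => H (fun j => dyadicCeil m (τ ω j)) ω :=
  measurable_apply_of_countable (G := fun z => H fun j => z j / 2 ^ m) (fun _ => hH _)
    (d := fun ω j => dyadicIndex m (τ ω j)) (by fun_prop)

end Dyadic

lemma tendsto_integral_mul_of_norm_le_one {Ω : Type*} [MeasurableSpace Ω] {P : Measure Ω}
    [IsFiniteMeasure P] {F : Ω → ℂ} (hFm : Measurable F) (hFb : ∀ ω, ‖F ω‖ ≤ 1)
    {g : ℕ → Ω → ℂ} {g₀ : Ω → ℂ} (hgm : ∀ m, Measurable (g m)) (hgb : ∀ m ω, ‖g m ω‖ ≤ 1)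
    (hlim : ∀ᵐ ω ∂P, Tendsto (fun m => g m ω) atTop (𝓝 (g₀ ω))) :
    Tendsto (fun m => ∫ ω, F ω * g m ω ∂P) atTop (𝓝 (∫ ω, F ω * g₀ ω ∂P)) := by
  refine tendsto_integral_of_dominated_convergence (fun _ => 1)
    (fun m => (hFm.mul (hgm m)).aestronglyMeasurable) (integrable_const 1)
    (fun m => ae_of_all _ fun ω => ?_) (hlim.mono fun ω h => tendsto_const_nhds.mul h)
  rw [norm_mul]
  exact mul_le_one₀ (hFb ω) (norm_nonneg _) (hgb m ω)

section Subordination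

variable {Ω : Type*} [mΩ : MeasurableSpace Ω] {P : Measure Ω} [IsProbabilityMeasure P] {n : ℕ}
  {X : ℝ → Ω → (Fin n → ℝ)} {τ : Ω → Fin n → ℝ} {F : Ω → ℂ}

lemma integral_mul_charExp_comp_dyadicCeil (hXm : ∀ t, Measurable (X t))
    {𝒢 : MeasurableSpace Ω} (h𝒢 : 𝒢 ≤ mΩ) (hind : Indep 𝒢 (processSigma X) P)
    (hτ : Measurable[𝒢] τ) (hF : Measurable[𝒢] F) (hFb : ∀ ω, ‖F ω‖ ≤ 1) (θ : Fin n → ℝ) (m : ℕ) :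
    ∫ ω, F ω * charExp θ (fun j => X (dyadicCeil m (τ ω j)) ω j) ∂P
      = ∫ ω, F ω * ∫ ω', charExp θ (fun j => X (dyadicCeil m (τ ω j)) ω' j) ∂P ∂P :=
  -- `𝒢` is a local instance here, so the ambient σ-algebra `mΩ` has to be named explicitly.
  integral_mul_apply_eq_of_indep (m₂ := processSigma X) (mΩ := mΩ) h𝒢
    (processSigma_le (mΩ := mΩ) hXm) hind (d := fun ω j => dyadicIndex m (τ ω j)) (by fun_prop)
    hF hFb (G := fun z ω => charExp θ (fun j => X (z j / 2 ^ m) ω j))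
    (fun z => (continuous_charExp θ).measurable.comp
      (measurable_eval_diag (mΩ := processSigma X) (measurable_processSigma X) _))
    (fun z ω => (norm_charExp _ _).le)

lemma tendsto_integral_mul_charExp_comp_dyadicCeil (hXm : ∀ t, Measurable (X t))
    (hcad : ∀ᵐ ω ∂P, IsCadlagOn fun t => X t ω) (hτm : Measurable τ) (hτ : ∀ᵐ ω ∂P, 0 ≤ τ ω)
    (hFm : Measurable F) (hFb : ∀ ω, ‖F ω‖ ≤ 1) (θ : Fin n → ℝ) :
    Tendsto (fun m => ∫ ω, F ω * charExp θ (fun j => X (dyadicCeil m (τ ω j)) ω j) ∂P) atTop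
      (𝓝 (∫ ω, F ω * charExp θ (fun j => X (τ ω j) ω j) ∂P)) := by
  refine tendsto_integral_mul_of_norm_le_one hFm hFb
    (measurable_comp_dyadicCeil (fun s => (continuous_charExp θ).measurable.comp
      (measurable_eval_diag hXm s)) hτm) (fun m ω => (norm_charExp _ _).le) ?_
  filter_upwards [hcad, hτ] with ω hω hτω
  refine ((continuous_charExp θ).tendsto _).comp (tendsto_pi_nhds.2 fun j => ?_)
  exact ((continuous_apply j).continuousAt.comp_continuousWithinAt
    (hω.1 _ (hτω j))).tendsto.comp (tendsto_dyadicCeil _)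

lemma tendsto_integral_mul_integral_charExp_comp_dyadicCeil (hX : IsLevyProcess P X)
    {Ψ : (Fin n → ℝ) → ℂ} (hΨ : IsCharExponent P X Ψ) (hτm : Measurable τ)
    (hτ : ∀ᵐ ω ∂P, 0 ≤ τ ω) (hFm : Measurable F) (hFb : ∀ ω, ‖F ω‖ ≤ 1) (θ : Fin n → ℝ) :
    Tendsto
      (fun m => ∫ ω, F ω * ∫ ω', charExp θ (fun j => X (dyadicCeil m (τ ω j)) ω' j) ∂P ∂P)
      atTop (𝓝 (∫ ω, F ω * Complex.exp (ordExpSorted (τ ω) Ψ θ) ∂P)) := by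
  refine tendsto_integral_mul_of_norm_le_one hFm hFb
    (measurable_comp_dyadicCeil (H := fun s _ => ∫ ω', charExp θ (fun j => X (s j) ω' j) ∂P)
      (fun _ => measurable_const) hτm) (fun m ω => ?_) ?_
  · simpa using norm_integral_le_of_norm_le_const (μ := P)
      (ae_of_all _ fun ω' => (norm_charExp θ (fun j => X (dyadicCeil m (τ ω j)) ω' j)).le)
  filter_upwards [hτ] with ω hτω
  have hsort : Monotone (τ ω ∘ Tuple.sort (τ ω)) := Tuple.monotone_sort _
  have hexp : ∀ m, ∫ ω', charExp θ (fun j => X (dyadicCeil m (τ ω j)) ω' j) ∂P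
      = Complex.exp (ordExp (Tuple.sort (τ ω)) (fun j => dyadicCeil m (τ ω j)) Ψ θ) := fun m =>
    hX.integral_charExp_eq_exp_ordExp hΨ _ (fun j => (hτω j).trans (le_dyadicCeil m _))
      ((monotone_dyadicCeil m).comp hsort) θ
  simp only [hexp]
  refine ((Complex.continuous_exp.comp (continuous_ordExp _ Ψ θ)).tendsto _).comp
    (tendsto_pi_nhds.2 fun j => ?_)
  exact (tendsto_dyadicCeil _).mono_right nhdsWithin_le_nhds

end Subordination

/-- for a Lévy process `X` with characteristic exponent `Ψ` and an independent
subordinator `T`, the joint characteristic function of `(T(t), (X∘T)(t))` satisfies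
`E[exp(i⟨θ₁,T(t)⟩ + i⟨θ₂,(X∘T)(t)⟩)] = E[exp(i⟨θ₁,T(t)⟩ + (T(t) ▸ Ψ)(θ₂))]`. -/
theorem charFun_strong_subordination {Ω : Type*} [MeasurableSpace Ω]
    (P : Measure Ω) [IsProbabilityMeasure P] {n : ℕ}
    (X T : ℝ → Ω → (Fin n → ℝ)) (Ψ : (Fin n → ℝ) → ℂ)
    (hX : IsLevyProcess P X) (hΨ : IsCharExponent P X Ψ)
    (hT : IsSubordinator P T)
    (hindep : Indep (processSigma X) (processSigma T) P) :
    ∀ t : ℝ, 0 ≤ t → ∀ θ₁ θ₂ : Fin n → ℝ,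
      ∫ ω, Complex.exp (Complex.I * ((∑ j, θ₁ j * T t ω j : ℝ) : ℂ)
            + Complex.I * ((∑ j, θ₂ j * X (T t ω j) ω j : ℝ) : ℂ)) ∂P
        = ∫ ω, Complex.exp (Complex.I * ((∑ j, θ₁ j * T t ω j : ℝ) : ℂ)
            + ordExpSorted (T t ω) Ψ θ₂) ∂P := by
  intro t ht θ₁ θ₂
  obtain ⟨⟨hTm, -⟩, hTmono⟩ := hT
  have hσT := processSigma_le hTm
  have hTt : ∀ᵐ ω ∂P, 0 ≤ T t ω := hTmono.mono fun ω h j => (h j).1 t ht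
  have hF : Measurable[processSigma T] fun ω => charExp θ₁ (T t ω) :=
    (continuous_charExp θ₁).measurable.comp (measurable_processSigma T t)
  have hFm := hF.mono hσT le_rfl
  have hFb : ∀ ω, ‖charExp θ₁ (T t ω)‖ ≤ 1 := fun ω => (norm_charExp _ _).le
  simp only [Complex.exp_add]
  refine tendsto_nhds_unique
    (tendsto_integral_mul_charExp_comp_dyadicCeil hX.1 hX.2.2.2.2 (hTm t) hTt hFm hFb θ₂)
    ((tendsto_integral_mul_integral_charExp_comp_dyadicCeil hX hΨ (hTm t) hTt hFm hFb θ₂).congr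
      fun m => ?_)
  exact (integral_mul_charExp_comp_dyadicCeil hX.1 hσT hindep.symm (measurable_processSigma T t)
    hF hFb θ₂ m).symm

end
end

section
/- Let n₁,…,n_d ≥ 1 with n = n₁+…+n_d, and let J_m = {n₁+…+n_{m−1}+1, …, n₁+…+n_m} be the m-th block of indices in {1,…,n}. Let ψ_m : ℝ^{n_m} → ℂ satisfy ψ_m(0) = 0 for each 1 ≤ m ≤ d, and define Ψ : ℝ^n → ℂ by Ψ(θ) := Σ_{m=1}^d ψ_m(θ|_{J_m}), where θ|_{J_m} ∈ ℝ^{n_m} denotes the restriction of θ to the coordinates in J_m. Let r ∈ [0,∞)^d and define t ∈ [0,∞)^n by t_j := r_m for j ∈ J_m. Then for every permutation σ of {1,…,n} with t_{σ(1)} ≤ … ≤ t_{σ(n)}, one has (t ▸ Ψ)_σ(θ) = Σ_{m=1}^d r_m ψ_m(θ|_{J_m}) for all θ ∈ ℝ^n. -/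
/-!
The ordered exponent is linear in `Ψ`, so it suffices to treat one block `ψₘ`, a function of
the coordinates in `Jₘ` vanishing at `0`. Let `K` be the first position at which `σ` enters
`Jₘ`. Before `K` the projection `π_{σ(k),…,σ(n)}` keeps all of `Jₘ`, and the increments of `t`
telescope to `t_{σ(K)} = rₘ`. After `K` either `Jₘ` has been projected away entirely, so the
term is `ψₘ(0) = 0`, or some later position still lies in `Jₘ`; then monotonicity squeezes
`t_{σ(k-1)}` and `t_{σ(k)}` between two values equal to `rₘ`, and the increment vanishes.
-/

open MeasureTheory ProbabilityTheory Filter Set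

noncomputable section

section OrderedExponent

theorem Equiv.exists_le_and_apply_eq_iff {α ι : Type*} [Preorder α] (e : α ≃ ι) {a : α}
    {i : ι} : (∃ b, a ≤ b ∧ e b = i) ↔ a ≤ e.symm i := by
  simp [← Equiv.eq_symm_apply]

variable {ι : Type*} {N : ℕ} (σ : Fin N ≃ ι)

/-- Prepending `0` to `k ↦ s (σ k)` encodes the convention `s_{σ(0)} = 0`, turning the
increments into the differences `f k.succ - f k.castSucc` that `Fin.sum_Iic_sub` telescopes. -/
theorem ordExp_eq_sum_cons_sub (s : ι → ℝ) (Φ : (ι → ℝ) → ℂ) (θ : ι → ℝ) :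
    ordExp σ s Φ θ = ∑ k : Fin N,
      ((Fin.cons 0 fun k => (s (σ k) : ℂ) : Fin (N + 1) → ℂ) k.succ -
        (Fin.cons 0 fun k => (s (σ k) : ℂ) : Fin (N + 1) → ℂ) k.castSucc) *
      Φ ({j | ∃ m, k ≤ m ∧ σ m = j}.indicator θ) := by
  refine Finset.sum_congr rfl fun k _ => congrArg (· * _) ?_
  rw [Fin.cons_succ]
  rcases k with ⟨_ | i, hi⟩
  · rfl
  · rw [dif_neg i.succ_ne_zero]
    exact congrArg _
      (Fin.cons_succ (α := fun _ : Fin (N + 1) => ℂ) 0 (fun k => (s (σ k) : ℂ)) ⟨i, by omega⟩).symm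

theorem ordExp_sum {α : Type*} (S : Finset α) (s : ι → ℝ) (Φ : α → (ι → ℝ) → ℂ) (θ : ι → ℝ) :
    ordExp σ s (fun x => ∑ a ∈ S, Φ a x) θ = ∑ a ∈ S, ordExp σ s (Φ a) θ := by
  simp only [ordExp, Finset.mul_sum]
  exact Finset.sum_comm

theorem ordExp_eq_mul_of_dependsOn {s : ι → ℝ} (hσ : Monotone fun k => s (σ k))
    {Φ : (ι → ℝ) → ℂ} {B : Set ι} (hΦ : DependsOn Φ B) (hΦ0 : Φ 0 = 0)
    {c : ℝ} (hs : ∀ i ∈ B, s i = c) (θ : ι → ℝ) :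
    ordExp σ s Φ θ = c * Φ θ := by
  rcases B.eq_empty_or_nonempty with rfl | ⟨i, hi⟩
  · have hΦ_zero : ∀ x, Φ x = 0 := fun x => (hΦ.empty x 0).trans hΦ0
    simp [ordExp, hΦ_zero]
  obtain ⟨K, hKB, hKmin⟩ := wellFounded_lt.has_min {k | σ k ∈ B} ⟨σ.symm i, by simpa⟩
  set f : Fin (N + 1) → ℂ := Fin.cons 0 fun k => (s (σ k) : ℂ)
  have hK_le : ∀ i ∈ B, K ≤ σ.symm i := fun i hi => not_lt.1 (hKmin _ (by simpa))
  have head : ∀ k ≤ K, Φ ({j | ∃ m, k ≤ m ∧ σ m = j}.indicator θ) = Φ θ := by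
    refine fun k hk => hΦ fun i hi => Set.indicator_of_mem ?_ θ
    exact σ.exists_le_and_apply_eq_iff.2 (hk.trans (hK_le i hi))
  have tail : ∀ k, K < k →
      (f k.succ - f k.castSucc) * Φ ({j | ∃ m, k ≤ m ∧ σ m = j}.indicator θ) = 0 := by
    intro k hKk
    by_cases hB : ∃ i ∈ B, k ≤ σ.symm i
    · obtain ⟨i, hi, hki⟩ := hB
      set k' : Fin N := ⟨k - 1, by omega⟩
      have hk' : k.castSucc = k'.succ := Fin.ext (by simp [k']; omega)
      have hKk' : K ≤ k' := Fin.le_def.2 (by simp [k']; omega)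
      have hk'k : k' ≤ k := Fin.le_def.2 (by simp [k'])
      have hck : s (σ k) = c := le_antisymm (by simpa [hs i hi] using hσ hki)
        (hs _ hKB ▸ hσ (hKk'.trans hk'k))
      have hck' : s (σ k') = c := le_antisymm (hck ▸ hσ hk'k) (hs _ hKB ▸ hσ hKk')
      simp [f, hk', hck, hck']
    · push Not at hB
      refine mul_eq_zero_of_right _ ((hΦ fun i hi => Set.indicator_of_notMem ?_ θ).trans hΦ0)
      simpa [σ.exists_le_and_apply_eq_iff] using hB i hi
  calc ordExp σ s Φ θ = ∑ k ∈ Finset.Iic K, (f k.succ - f k.castSucc) * Φ θ := by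
        rw [ordExp_eq_sum_cons_sub, ← Finset.sum_subset (Finset.subset_univ _)]
        · exact Finset.sum_congr rfl fun k hk => by rw [head k (Finset.mem_Iic.1 hk)]
        · exact fun k _ hk => tail k (not_le.1 (Finset.mem_Iic.not.1 hk))
    _ = c * Φ θ := by rw [← Finset.sum_mul, Fin.sum_Iic_sub]; simp [f, hs _ hKB]

end OrderedExponent

theorem ordExp_stacked_general {d : ℕ} (n : Fin d → ℕ)
    (ψ : ∀ m : Fin d, (Fin (n m) → ℝ) → ℂ) (hψ0 : ∀ m, ψ m 0 = 0)
    (Ψ : ((Σ m : Fin d, Fin (n m)) → ℝ) → ℂ)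
    (hΨ : ∀ θ : (Σ m : Fin d, Fin (n m)) → ℝ, Ψ θ = ∑ m : Fin d, ψ m (fun j => θ ⟨m, j⟩))
    (r : Fin d → ℝ)
    (t : (Σ m : Fin d, Fin (n m)) → ℝ) (ht : ∀ p : Σ m : Fin d, Fin (n m), t p = r p.1)
    (N : ℕ) (σ : Fin N ≃ (Σ m : Fin d, Fin (n m)))
    (hσ : Monotone fun k => t (σ k)) (θ : (Σ m : Fin d, Fin (n m)) → ℝ) :
    ordExp σ t Ψ θ = ∑ m : Fin d, (r m : ℂ) * ψ m (fun j => θ ⟨m, j⟩) := by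
  obtain rfl : Ψ = fun θ => ∑ m, ψ m (fun j => θ ⟨m, j⟩) := funext hΨ
  rw [ordExp_sum]
  refine Finset.sum_congr rfl fun m _ => ordExp_eq_mul_of_dependsOn σ hσ (B := {p | p.1 = m})
    ?_ (hψ0 m) (fun p hp => by rw [ht, hp]) θ
  rintro x y hxy
  exact congrArg (ψ m) (funext fun j => hxy ⟨m, j⟩ rfl)

/-- for a stacked exponent `Ψ(θ) = ∑ₘ ψₘ(θ|_{Jₘ})` with `ψₘ(0) = 0`, and a time
vector `t` that is constant on each block `Jₘ` with value `rₘ ≥ 0`, the ordered exponent is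
`(t ▸ Ψ)_σ(θ) = ∑ₘ rₘ ψₘ(θ|_{Jₘ})`, for any sorting permutation `σ`. -/
theorem ordExp_stacked {d : ℕ} (n : Fin d → ℕ) (hn : ∀ m, 1 ≤ n m)
    (ψ : ∀ m : Fin d, (Fin (n m) → ℝ) → ℂ) (hψ0 : ∀ m, ψ m 0 = 0)
    (Ψ : ((Σ m : Fin d, Fin (n m)) → ℝ) → ℂ)
    (hΨ : ∀ θ : (Σ m : Fin d, Fin (n m)) → ℝ, Ψ θ = ∑ m : Fin d, ψ m (fun j => θ ⟨m, j⟩))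
    (r : Fin d → ℝ) (hr : ∀ m, 0 ≤ r m)
    (t : (Σ m : Fin d, Fin (n m)) → ℝ) (ht : ∀ p : Σ m : Fin d, Fin (n m), t p = r p.1)
    (N : ℕ) (σ : Fin N ≃ (Σ m : Fin d, Fin (n m)))
    (hσ : Monotone fun k => t (σ k)) (θ : (Σ m : Fin d, Fin (n m)) → ℝ) :
    ordExp σ t Ψ θ = ∑ m : Fin d, (r m : ℂ) * ψ m (fun j => θ ⟨m, j⟩) :=
  ordExp_stacked_general n ψ hψ0 Ψ hΨ r t ht N σ hσ θ

end
end

section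
/- Let X be an n-dimensional Lévy process with characteristic exponent Ψ. Then for every fixed t = (t₁,…,tₙ) ∈ [0,∞)^n, every θ = (θ₁,…,θₙ) ∈ ℝ^n, and every permutation σ of {1,…,n} with t_{σ(1)} ≤ … ≤ t_{σ(n)}, the random vector X(t) := (X₁(t₁), …, Xₙ(tₙ)) satisfies E[ exp( i Σ_{k=1}^n θ_k X_k(t_k) ) ] = exp( (t ▸ Ψ)_σ(θ) ). In particular, X(t) is infinitely divisible with characteristic exponent (t ▸ Ψ)(θ). -/
open MeasureTheory ProbabilityTheory Filter Set

noncomputable section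

/-!
Sort the times as `0 = u₀ ≤ u₁ = t_{σ 0} ≤ ⋯ ≤ uₙ = t_{σ (n-1)}`. Summation by parts rewrites
`∑ₖ θₖ Xₖ(tₖ)` as `∑ᵢ ⟨ηᵢ, X(uᵢ₊₁) - X(uᵢ)⟩`, where `ηᵢ` keeps the coordinates `σ i, …, σ (n-1)`
of `θ`. The increments are independent, so the characteristic function factors, and by
stationarity the `i`-th factor is `exp ((uᵢ₊₁ - uᵢ) Ψ ηᵢ)`; these factors are the summands of
`ordExp`.
-/

open Finset

lemma Matrix.monotone_vecCons_of_le {α : Type*} [Preorder α] {n : ℕ} {a : α} {f : Fin n → α}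
    (hf : Monotone f) (ha : ∀ i, a ≤ f i) : Monotone (Matrix.vecCons a f) := by
  intro i j hij
  cases i using Fin.cases with
  | zero =>
    cases j using Fin.cases with
    | zero => exact le_rfl
    | succ j => simpa using ha j
  | succ i =>
    cases j using Fin.cases with
    | zero => exact absurd hij (Fin.succ_ne_zero i ∘ Fin.le_zero_iff.1)
    | succ j => simpa using hf (Fin.succ_le_succ_iff.1 hij)

lemma Matrix.vecCons_castSucc_eq_ite {α : Type*} {n : ℕ} (a : α) (f : Fin n → α) (k : Fin n) :
    Matrix.vecCons a f k.castSucc = if (k : ℕ) = 0 then a else f ⟨k - 1, by omega⟩ := by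
  rcases k with ⟨_ | k, _⟩ <;> rfl

lemma ordExp_eq_sum_vecCons {ι : Type*} {N : ℕ} (σ : Fin N ≃ ι) (s : ι → ℝ)
    (Ψ : (ι → ℝ) → ℂ) (θ : ι → ℝ) :
    ordExp σ s Ψ θ = ∑ k : Fin N,
      ((Matrix.vecCons 0 (s ∘ σ) k.succ - Matrix.vecCons 0 (s ∘ σ) k.castSucc : ℝ) : ℂ) *
        Ψ ({j | ∃ m, k ≤ m ∧ σ m = j}.indicator θ) := by
  refine sum_congr rfl fun k _ => ?_
  rw [Matrix.vecCons_castSucc_eq_ite, Matrix.cons_val_succ, dite_eq_ite]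
  split_ifs <;> simp

lemma sum_indicator_mul_increments {ι : Type*} [Fintype ι] {N : ℕ} (σ : Fin N ≃ ι)
    (θ : ι → ℝ) (Y : Fin (N + 1) → ι → ℝ) :
    ∑ i : Fin N, ∑ j, {j | ∃ m, i ≤ m ∧ σ m = j}.indicator θ j * (Y i.succ j - Y i.castSucc j)
      = ∑ j, θ j * (Y (σ.symm j).succ j - Y 0 j) := by
  classical
  rw [sum_comm]
  refine sum_congr rfl fun j _ => ?_
  have hmem : ∀ i, j ∈ {j | ∃ m, i ≤ m ∧ σ m = j} ↔ i ≤ σ.symm j := fun i =>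
    ⟨fun ⟨m, him, hm⟩ => hm ▸ by simpa using him, fun h => ⟨σ.symm j, h, σ.apply_symm_apply j⟩⟩
  simp only [Set.indicator_apply, hmem, ite_mul, zero_mul]
  rw [← sum_filter, ← mul_sum, ← Fin.sum_Iic_sub (σ.symm j) (fun m => Y m j)]
  congr 1
  exact sum_congr (by ext; simp) fun _ _ => rfl

def expDot {d : ℕ} (η x : Fin d → ℝ) : ℂ :=
  Complex.exp (Complex.I * ((∑ j, η j * x j : ℝ) : ℂ))

lemma measurable_expDot {d : ℕ} (η : Fin d → ℝ) : Measurable (expDot η) := by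
  unfold expDot; fun_prop

lemma cexp_sum_sum_eq_prod_expDot {ι : Type*} {d : ℕ} (s : Finset ι) (η x : ι → Fin d → ℝ) :
    Complex.exp (Complex.I * ((∑ i ∈ s, ∑ j, η i j * x i j : ℝ) : ℂ)) =
      ∏ i ∈ s, expDot (η i) (x i) := by
  simp only [expDot, Complex.ofReal_sum, mul_sum, Complex.exp_sum]

section Increments

variable {Ω : Type*} [MeasurableSpace Ω] {P : Measure Ω}

lemma HasStatIncrements.integral_comp_sub {E F : Type*} [MeasurableSpace E] [Sub E]
    [MeasurableSub₂ E] [NormedAddCommGroup F] [NormedSpace ℝ F] {X : ℝ → Ω → E}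
    (hX : HasStatIncrements P X) (hXm : ∀ t, Measurable (X t)) {a b : ℝ} (ha : 0 ≤ a)
    (hab : a ≤ b) {f : E → F} (hf : StronglyMeasurable f) :
    ∫ ω, f (X b ω - X a ω) ∂P = ∫ ω, f (X (b - a) ω) ∂P := by
  have hlaw := hX a (b - a) ha (sub_nonneg.2 hab)
  rw [add_sub_cancel] at hlaw
  rw [← integral_map (φ := fun ω => X b ω - X a ω) ((hXm b).sub (hXm a)).aemeasurable
    hf.aestronglyMeasurable, hlaw,
    integral_map (hXm _).aemeasurable hf.aestronglyMeasurable]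

lemma IsCharExponent.integral_expDot_sub {d : ℕ} {X : ℝ → Ω → Fin d → ℝ}
    {Ψ : (Fin d → ℝ) → ℂ} (hΨ : IsCharExponent P X Ψ) (hX : HasStatIncrements P X)
    (hXm : ∀ t, Measurable (X t)) {a b : ℝ} (ha : 0 ≤ a) (hab : a ≤ b) (η : Fin d → ℝ) :
    ∫ ω, expDot η (X b ω - X a ω) ∂P = Complex.exp (((b - a : ℝ) : ℂ) * Ψ η) := by
  rw [hX.integral_comp_sub hXm ha hab (measurable_expDot η).stronglyMeasurable]
  exact hΨ _ (sub_nonneg.2 hab) η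

theorem integral_prod_expDot_increments {d k : ℕ} {X : ℝ → Ω → Fin d → ℝ}
    {Ψ : (Fin d → ℝ) → ℂ} (hXm : ∀ t, Measurable (X t)) (hXi : _root_.HasIndepIncrements P X)
    (hXs : HasStatIncrements P X) (hΨ : IsCharExponent P X Ψ) {u : Fin (k + 1) → ℝ}
    (hu0 : u 0 = 0) (hu : Monotone u) (η : Fin k → Fin d → ℝ) :
    ∫ ω, ∏ i, expDot (η i) (X (u i.succ) ω - X (u i.castSucc) ω) ∂P =
      Complex.exp (∑ i, ((u i.succ - u i.castSucc : ℝ) : ℂ) * Ψ (η i)) := by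
  rw [(hXi k u hu0 hu).integral_fun_prod_comp (f := fun i => expDot (η i))
    (fun i => ((hXm _).sub (hXm _)).aemeasurable)
    (fun i => (measurable_expDot _).aestronglyMeasurable), Complex.exp_sum]
  refine prod_congr rfl fun i _ => hΨ.integral_expDot_sub hXs hXm ?_ (hu i.castSucc_le_succ) _
  exact hu0 ▸ hu (Fin.zero_le _)

end Increments

theorem charFun_levy_multivariate_time_general {Ω : Type*} [MeasurableSpace Ω]
    (P : Measure Ω) {n : ℕ}
    (X : ℝ → Ω → (Fin n → ℝ)) (Ψ : (Fin n → ℝ) → ℂ)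
    (hX : IsLevyProcess P X) (hΨ : IsCharExponent P X Ψ)
    (t : Fin n → ℝ) (ht : ∀ k, 0 ≤ t k) (θ : Fin n → ℝ)
    (σ : Equiv.Perm (Fin n)) (hσ : Monotone fun k => t (σ k)) :
    ∫ ω, Complex.exp (Complex.I * ((∑ k, θ k * X (t k) ω k : ℝ) : ℂ)) ∂P
      = Complex.exp (ordExp σ t Ψ θ) := by
  obtain ⟨hXm, hX0, hXi, hXs, -⟩ := hX
  set u : Fin (n + 1) → ℝ := Matrix.vecCons 0 (t ∘ σ)
  have hu_mono : Monotone u := Matrix.monotone_vecCons_of_le hσ fun i => ht (σ i)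
  calc ∫ ω, Complex.exp (Complex.I * ((∑ k, θ k * X (t k) ω k : ℝ) : ℂ)) ∂P
      = ∫ ω, ∏ i, expDot ({j | ∃ m, i ≤ m ∧ σ m = j}.indicator θ)
          (X (u i.succ) ω - X (u i.castSucc) ω) ∂P := by
        refine integral_congr_ae ?_
        filter_upwards [hX0] with ω hω
        rw [← cexp_sum_sum_eq_prod_expDot]
        simp only [Pi.sub_apply]
        rw [sum_indicator_mul_increments σ θ fun m => X (u m) ω]
        simp [u, hω]
    _ = Complex.exp (ordExp σ t Ψ θ) := by
        rw [integral_prod_expDot_increments hXm hXi hXs hΨ rfl hu_mono, ordExp_eq_sum_vecCons]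

/-- for a Lévy process `X` with characteristic exponent `Ψ`, the random vector
`X(t) = (X₁(t₁), …, Xₙ(tₙ))`, `t ∈ [0,∞)ⁿ`, has characteristic function
`E[exp(i ∑ₖ θₖ Xₖ(tₖ))] = exp((t ▸ Ψ)_σ(θ))` for any sorting permutation `σ` of `t`. -/
theorem charFun_levy_multivariate_time {Ω : Type*} [MeasurableSpace Ω]
    (P : Measure Ω) [IsProbabilityMeasure P] {n : ℕ}
    (X : ℝ → Ω → (Fin n → ℝ)) (Ψ : (Fin n → ℝ) → ℂ)
    (hX : IsLevyProcess P X) (hΨ : IsCharExponent P X Ψ)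
    (t : Fin n → ℝ) (ht : ∀ k, 0 ≤ t k) (θ : Fin n → ℝ)
    (σ : Equiv.Perm (Fin n)) (hσ : Monotone fun k => t (σ k)) :
    ∫ ω, Complex.exp (Complex.I * ((∑ k, θ k * X (t k) ω k : ℝ) : ℂ)) ∂P
      = Complex.exp (ordExp σ t Ψ θ) :=
  charFun_levy_multivariate_time_general P X Ψ hX hΨ t ht θ σ hσ

end
end
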